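/- arXiv:2203.13960 — 7 statements merged into one kernel-verified Lean document; each statement's English description precedes it below -/
import Mathlib

section
/- Let Ω ⊆ ℝⁿ be open (n ≥ 2), G : ℝ → ℝ differentiable, and v : Ω → ℝ a smooth solution of the Eikonal equation |∇v|² = G(v) with ∂v/∂xₙ > 0 on Ω. Define F_i = (∂v/∂x_i)/(∂v/∂xₙ) for i = 1,…,n−1. Then for each i, ∂F_i/∂xₙ + Σ_{j=1}^{n−1} F_j ∂F_i/∂x_j = 0 on Ω. -/
noncomputable def pd {n : ℕ} (i : Fin n) (f : (Fin n → ℝ) → ℝ) (x : Fin n → ℝ) : ℝ :=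
  fderiv ℝ f x (Pi.single i 1)

theorem stmt_0 {n : ℕ} (hn : 1 ≤ n) (Ω : Set (Fin (n + 1) → ℝ)) (hΩ : IsOpen Ω)
    (G : ℝ → ℝ) (hG : Differentiable ℝ G)
    (v : (Fin (n + 1) → ℝ) → ℝ) (hv : ContDiff ℝ (⊤ : ℕ∞) v)
    (heik : ∀ x ∈ Ω, ∑ j, (pd j v x) ^ 2 = G (v x))
    (hmono : ∀ x ∈ Ω, 0 < pd (Fin.last n) v x)
    (F : Fin n → (Fin (n + 1) → ℝ) → ℝ)
    (hF : ∀ i x, F i x = pd (Fin.castSucc i) v x / pd (Fin.last n) v x) :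
    ∀ i : Fin n, ∀ x ∈ Ω,
      pd (Fin.last n) (F i) x
        + ∑ j : Fin n, F j x * pd (Fin.castSucc j) (F i) x = 0 := by
  intro i x hx
  have hvd : Differentiable ℝ v := hv.differentiable (by simp)
  have hfc : ContDiff ℝ (⊤ : ℕ∞) (fderiv ℝ v) := hv.fderiv_right (by simp)
  have hfd : Differentiable ℝ (fderiv ℝ v) := hfc.differentiable (by simp)
  set f'' := fderiv ℝ (fderiv ℝ v) x with hf''def
  have hf'' : HasFDerivAt (fderiv ℝ v) f'' x := (hfd x).hasFDerivAt
  have hsymm : ∀ a b, f'' a b = f'' b a :=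
    second_derivative_symmetric (fun y => (hvd y).hasFDerivAt) hf''
  -- derivative of each partial derivative
  set D : Fin (n+1) → ((Fin (n+1) → ℝ) →L[ℝ] ℝ) :=
    fun k => (ContinuousLinearMap.apply ℝ ℝ (Pi.single k (1:ℝ))).comp f'' with hD
  have hw : ∀ k, HasFDerivAt (fun y => pd k v y) (D k) x := by
    intro k
    have := ((ContinuousLinearMap.apply ℝ ℝ (Pi.single k (1:ℝ))).hasFDerivAt
      (x := fderiv ℝ v x)).comp x hf''
    exact this
  set u : Fin (n+1) → ℝ := fun k => pd k v x with hu
  set B : Fin (n+1) → Fin (n+1) → ℝ :=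
    fun a b => f'' (Pi.single a (1:ℝ)) (Pi.single b (1:ℝ)) with hB
  have hDapp : ∀ k d, D k (Pi.single d (1:ℝ)) = B d k := by
    intro k d; simp [hD, hB]
  have hBsymm : ∀ a b, B a b = B b a := fun a b => hsymm _ _
  -- eikonal relation differentiated
  have hS : HasFDerivAt (fun y => ∑ k, (pd k v y)^2)
      (∑ k, (pd k v x • D k + pd k v x • D k)) x := by
    apply HasFDerivAt.fun_sum
    intro k _
    have h2 := (hw k).mul (hw k)
    have : (fun y => (pd k v y)^2) = fun y => pd k v y * pd k v y := by
      funext y; ring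
    rw [this]; exact h2
  have hGv : HasFDerivAt (fun y => G (v y)) (deriv G (v x) • fderiv ℝ v x) x := by
    have := ((hG (v x)).hasDerivAt).comp_hasFDerivAt x (hvd x).hasFDerivAt
    exact this
  have hDeq : (∑ k, (pd k v x • D k + pd k v x • D k)) = deriv G (v x) • fderiv ℝ v x := by
    rw [← hS.fderiv, ← hGv.fderiv]
    apply Filter.EventuallyEq.fderiv_eq
    filter_upwards [hΩ.mem_nhds hx] with y hy using heik y hy
  have key : ∀ d : Fin (n+1), ∑ k, 2 * u k * B d k = deriv G (v x) * u d := by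
    intro d
    have := congrArg (fun (L : (Fin (n+1) → ℝ) →L[ℝ] ℝ) => L (Pi.single d (1:ℝ))) hDeq
    simp only [ContinuousLinearMap.sum_apply, ContinuousLinearMap.add_apply,
      ContinuousLinearMap.smul_apply, ContinuousLinearMap.coe_smul', Pi.smul_apply,
      smul_eq_mul] at this
    calc ∑ k, 2 * u k * B d k = ∑ k, (pd k v x * D k (Pi.single d 1)
          + pd k v x * D k (Pi.single d 1)) := by
          refine Finset.sum_congr rfl fun k _ => ?_
          rw [hDapp]; ring
      _ = deriv G (v x) * u d := by rw [this]; rfl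
  -- derivative of F a
  set c := pd (Fin.last n) v x with hc
  have hcne : c ≠ 0 := ne_of_gt (hmono x hx)
  have hFa : ∀ a : Fin n, HasFDerivAt (F a)
      (pd (Fin.castSucc a) v x • ((-(c^2)⁻¹) • D (Fin.last n)) + c⁻¹ • D (Fin.castSucc a)) x := by
    intro a
    have hFeq : F a = fun y => pd (Fin.castSucc a) v y * (pd (Fin.last n) v y)⁻¹ := by
      funext y; rw [hF, div_eq_mul_inv]
    rw [hFeq]
    have hinv : HasFDerivAt (fun y => (pd (Fin.last n) v y)⁻¹) ((-(c^2)⁻¹) • D (Fin.last n)) x :=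
      (hasDerivAt_inv hcne).comp_hasFDerivAt x (hw (Fin.last n))
    exact (hw (Fin.castSucc a)).mul hinv
  have hpdF : ∀ (a : Fin n) (d : Fin (n+1)), pd d (F a) x
      = u (Fin.castSucc a) * (-(c^2)⁻¹ * B d (Fin.last n)) + c⁻¹ * B d (Fin.castSucc a) := by
    intro a d
    have := (hFa a).fderiv
    rw [pd, this]
    simp [hDapp, mul_assoc]
    exact Or.inl rfl
  -- assemble
  set G' := deriv G (v x) with hG'
  set s1 := ∑ j : Fin n, u (Fin.castSucc j) * B (Fin.castSucc j) (Fin.castSucc i) with hs1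
  set s2 := ∑ j : Fin n, u (Fin.castSucc j) * B (Fin.castSucc j) (Fin.last n) with hs2
  have hul : u (Fin.last n) = c := rfl
  have r1 : 2 * s1 + 2 * c * B (Fin.castSucc i) (Fin.last n) = G' * u (Fin.castSucc i) := by
    have k1 := key (Fin.castSucc i)
    rw [Fin.sum_univ_castSucc] at k1
    have e1 : ∑ j : Fin n, 2 * u (Fin.castSucc j) * B (Fin.castSucc i) (Fin.castSucc j)
        = 2 * s1 := by
      rw [hs1, Finset.mul_sum]
      exact Finset.sum_congr rfl fun j _ => by
        rw [hBsymm (Fin.castSucc i) (Fin.castSucc j)]; ring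
    linear_combination k1 - e1 - 2 * B (Fin.castSucc i) (Fin.last n) * hul
  have r2 : 2 * s2 + 2 * c * B (Fin.last n) (Fin.last n) = G' * c := by
    have k2 := key (Fin.last n)
    rw [Fin.sum_univ_castSucc] at k2
    have e2 : ∑ j : Fin n, 2 * u (Fin.castSucc j) * B (Fin.last n) (Fin.castSucc j)
        = 2 * s2 := by
      rw [hs2, Finset.mul_sum]
      exact Finset.sum_congr rfl fun j _ => by
        rw [hBsymm (Fin.last n) (Fin.castSucc j)]; ring
    linear_combination k2 - e2 - 2 * B (Fin.last n) (Fin.last n) * hul + G' * hul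
  have hsum : ∑ j : Fin n, F j x * pd (Fin.castSucc j) (F i) x
      = (u (Fin.castSucc i) * (-(c^2)⁻¹) * s2 + c⁻¹ * s1) * c⁻¹ := by
    rw [hs1, hs2, Finset.mul_sum, Finset.mul_sum, ← Finset.sum_add_distrib, Finset.sum_mul]
    refine Finset.sum_congr rfl fun j _ => ?_
    rw [hpdF, hF]
    have : pd (Fin.castSucc j) v x = u (Fin.castSucc j) := rfl
    rw [this, ← hc]
    field_simp
  rw [hsum, hpdF]
  have hBs := hBsymm (Fin.last n) (Fin.castSucc i)
  field_simp
  linear_combination (c/2) * r1 - (u (Fin.castSucc i)/2) * r2 + c^2 * hBs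
end

section
/- Let u : Ω ⊆ ℝⁿ → ℝ be smooth with ∂u/∂xₙ > 0, and set F_i = (∂u/∂x_i)/(∂u/∂xₙ) for i = 1,…,n−1. Suppose each F_i satisfies ∂F_i/∂xₙ + Σ_{j=1}^{n−1} F_j ∂F_i/∂x_j = 0. Then Σ_{i=1}^{n−1} ∂F_i/∂x_i = 0 holds if and only if div(∇u/|∇u|) = 0. -/
open scoped ContDiff

private lemma hasFDerivAt_div'' {E : Type*} [NormedAddCommGroup E] [NormedSpace ℝ E]
    {c d : E → ℝ} {c' d' : E →L[ℝ] ℝ} {x : E}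
    (hc : HasFDerivAt c c' x) (hd : HasFDerivAt d d' x) (hx : d x ≠ 0) :
    HasFDerivAt (fun y => c y / d y) ((d x ^ 2)⁻¹ • (d x • c' - c x • d')) x := by
  have hinv : HasFDerivAt (fun y => (d y)⁻¹) ((-(d x ^ 2)⁻¹) • d') x := by
    exact (hasDerivAt_inv hx).comp_hasFDerivAt x hd
  have hm := hc.mul hinv
  simp only [div_eq_mul_inv]
  refine hm.congr_fderiv ?_
  ext v
  simp only [ContinuousLinearMap.smul_apply, ContinuousLinearMap.sub_apply,
    ContinuousLinearMap.add_apply, smul_eq_mul]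
  field_simp
  ring

private lemma pd_contDiff {m : ℕ} (i : Fin m) (u : (Fin m → ℝ) → ℝ) (hu : ContDiff ℝ ∞ u) :
    ContDiff ℝ ∞ (pd i u) := by
  have h := (contDiff_infty_iff_fderiv.mp hu).2
  exact (ContinuousLinearMap.apply ℝ ℝ (Pi.single i 1)).contDiff.comp h

private lemma key_alg {n : ℕ} (a : Fin (n+1) → ℝ) (b : Fin (n+1) → Fin (n+1) → ℝ)
    (haN : 0 < a (Fin.last n))
    (hE : ∀ i : Fin n, a (Fin.last n) * (∑ j, a j * b i.castSucc j)
        = a i.castSucc * (∑ j, a j * b (Fin.last n) j)) :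
    ((∑ i : Fin n, (a (Fin.last n) * b i.castSucc i.castSucc
        - a i.castSucc * b (Fin.last n) i.castSucc) / a (Fin.last n) ^ 2) = 0 ↔
      (∑ k : Fin (n+1), ((∑ j, a j ^ 2) * b k k - a k * (∑ j, a j * b j k))
        / Real.sqrt (∑ j, a j ^ 2) ^ 3) = 0) := by
  have haN' : a (Fin.last n) ≠ 0 := ne_of_gt haN
  have hS : 0 < ∑ j, a j ^ 2 := by
    have h1 : a (Fin.last n) ^ 2 ≤ ∑ j, a j ^ 2 :=
      Finset.single_le_sum (fun j _ => sq_nonneg (a j)) (Finset.mem_univ (Fin.last n))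
    nlinarith
  have hs : 0 < Real.sqrt (∑ j, a j ^ 2) := Real.sqrt_pos.2 hS
  have hs2 : Real.sqrt (∑ j, a j ^ 2) ^ 2 = ∑ j, a j ^ 2 := Real.sq_sqrt hS.le
  have htr : (∑ i : Fin n, (a (Fin.last n) * b i.castSucc i.castSucc
      - a i.castSucc * b (Fin.last n) i.castSucc))
      = a (Fin.last n) * (∑ k, b k k) - (∑ j, a j * b (Fin.last n) j) := by
    rw [Fin.sum_univ_castSucc (f := fun k => b k k),
      Fin.sum_univ_castSucc (f := fun j => a j * b (Fin.last n) j),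
      Finset.sum_sub_distrib, mul_add, Finset.mul_sum]
    ring
  have hswap : a (Fin.last n) * (∑ k, a k * (∑ j, a j * b j k))
      = (∑ j, a j ^ 2) * (∑ j, a j * b (Fin.last n) j) := by
    have h1 : (∑ k : Fin (n+1), a k * (∑ j, a j * b j k))
        = ∑ j : Fin (n+1), a j * (∑ k, a k * b j k) := by
      simp_rw [Finset.mul_sum]
      rw [Finset.sum_comm]
      exact Finset.sum_congr rfl fun j _ => Finset.sum_congr rfl fun k _ => by ring
    have h2 : ∀ j : Fin n, a (Fin.last n) * (a j.castSucc * (∑ k, a k * b j.castSucc k))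
        = a j.castSucc ^ 2 * (∑ j, a j * b (Fin.last n) j) := by
      intro j
      linear_combination a j.castSucc * hE j
    rw [h1, Finset.mul_sum,
      Fin.sum_univ_castSucc (f := fun j => a (Fin.last n) * (a j * (∑ k, a k * b j k))),
      Fin.sum_univ_castSucc (f := fun j => a j ^ 2),
      Finset.sum_congr rfl (fun j _ => h2 j), add_mul, Finset.sum_mul]
    ring
  have hL : (∑ i : Fin n, (a (Fin.last n) * b i.castSucc i.castSucc
      - a i.castSucc * b (Fin.last n) i.castSucc) / a (Fin.last n) ^ 2)
      = (a (Fin.last n) * (∑ k, b k k) - (∑ j, a j * b (Fin.last n) j)) / a (Fin.last n) ^ 2 := by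
    rw [← Finset.sum_div, htr]
  have hR : (∑ k : Fin (n+1), ((∑ j, a j ^ 2) * b k k - a k * (∑ j, a j * b j k))
        / Real.sqrt (∑ j, a j ^ 2) ^ 3)
      = (a (Fin.last n) * (∑ k, b k k) - (∑ j, a j * b (Fin.last n) j))
        / (a (Fin.last n) * Real.sqrt (∑ j, a j ^ 2)) := by
    rw [← Finset.sum_div, Finset.sum_sub_distrib, ← Finset.mul_sum]
    rw [div_eq_div_iff (by positivity) (by positivity)]
    linear_combination (-(Real.sqrt (∑ j, a j ^ 2))) * hswap
      + ((∑ j, a j * b (Fin.last n) j) * Real.sqrt (∑ j, a j ^ 2)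
        - a (Fin.last n) * Real.sqrt (∑ j, a j ^ 2) * (∑ k, b k k)) * hs2
  rw [hL, hR, div_eq_zero_iff, div_eq_zero_iff]
  have h1 : a (Fin.last n) ^ 2 ≠ 0 := pow_ne_zero 2 haN'
  have h2 : a (Fin.last n) * Real.sqrt (∑ j, a j ^ 2) ≠ 0 := by positivity
  simp [h1, h2]

theorem stmt_3 {n : ℕ} (hn : 1 ≤ n) (Ω : Set (Fin (n + 1) → ℝ)) (hΩ : IsOpen Ω)
    (u : (Fin (n + 1) → ℝ) → ℝ) (hu : ContDiff ℝ (⊤ : ℕ∞) u)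
    (hmono : ∀ x ∈ Ω, 0 < pd (Fin.last n) u x)
    (F : Fin n → (Fin (n + 1) → ℝ) → ℝ)
    (hF : ∀ i x, F i x = pd (Fin.castSucc i) u x / pd (Fin.last n) u x)
    (hEuler : ∀ i : Fin n, ∀ x ∈ Ω,
      pd (Fin.last n) (F i) x
        + ∑ j : Fin n, F j x * pd (Fin.castSucc j) (F i) x = 0) :
    ∀ x ∈ Ω,
      ((∑ i : Fin n, pd (Fin.castSucc i) (F i) x) = 0 ↔
        (∑ i : Fin (n + 1),
          pd i (fun y => pd i u y / Real.sqrt (∑ j, (pd j u y) ^ 2)) x) = 0) := by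
  intro x hx
  have huI : ContDiff ℝ ∞ u := hu.of_le (by simp)
  have hPdiff : ∀ i : Fin (n + 1), Differentiable ℝ (pd i u) := fun i =>
    (pd_contDiff i u huI).differentiable (by simp)
  have haN : 0 < pd (Fin.last n) u x := hmono x hx
  -- derivative of F i
  have hdF : ∀ (i : Fin n) (k : Fin (n + 1)),
      pd k (F i) x = (pd (Fin.last n) u x * fderiv ℝ (pd i.castSucc u) x (Pi.single k 1)
        - pd i.castSucc u x * fderiv ℝ (pd (Fin.last n) u) x (Pi.single k 1))
        / pd (Fin.last n) u x ^ 2 := by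
    intro i k
    have hFeq : F i = fun y => pd i.castSucc u y / pd (Fin.last n) u y := funext (hF i)
    have hd := hasFDerivAt_div'' ((hPdiff i.castSucc x).hasFDerivAt)
      ((hPdiff (Fin.last n) x).hasFDerivAt) (ne_of_gt haN)
    show fderiv ℝ (F i) x (Pi.single k 1) = _
    rw [hFeq, hd.fderiv]
    simp only [ContinuousLinearMap.smul_apply, ContinuousLinearMap.sub_apply, smul_eq_mul]
    rw [div_eq_inv_mul]
  -- sum of squares positivity
  have hS : 0 < ∑ j, pd j u x ^ 2 := by
    have h1 : pd (Fin.last n) u x ^ 2 ≤ ∑ j, pd j u x ^ 2 :=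
      Finset.single_le_sum (fun j _ => sq_nonneg (pd j u x)) (Finset.mem_univ (Fin.last n))
    nlinarith
  have hs : 0 < Real.sqrt (∑ j, pd j u x ^ 2) := Real.sqrt_pos.2 hS
  have hs2 : Real.sqrt (∑ j, pd j u x ^ 2) ^ 2 = ∑ j, pd j u x ^ 2 := Real.sq_sqrt hS.le
  -- derivative of the unit-gradient components
  have hdG : ∀ k : Fin (n + 1),
      pd k (fun y => pd k u y / Real.sqrt (∑ j, pd j u y ^ 2)) x
      = ((∑ j, pd j u x ^ 2) * fderiv ℝ (pd k u) x (Pi.single k 1)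
          - pd k u x * (∑ j, pd j u x * fderiv ℝ (pd j u) x (Pi.single k 1)))
        / Real.sqrt (∑ j, pd j u x ^ 2) ^ 3 := by
    intro k
    have hsq : ∀ j : Fin (n + 1), HasFDerivAt (fun y => pd j u y ^ 2)
        ((2 * pd j u x) • fderiv ℝ (pd j u) x) x := by
      intro j
      have h := (hPdiff j x).hasFDerivAt
      have h2 := (hasDerivAt_pow 2 (pd j u x)).comp_hasFDerivAt x h
      simpa [Function.comp_def] using h2
    have hSd : HasFDerivAt (fun y => ∑ j, pd j u y ^ 2)
        (∑ j, (2 * pd j u x) • fderiv ℝ (pd j u) x) x := by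
      have := HasFDerivAt.fun_sum (fun j (_ : j ∈ Finset.univ) => hsq j)
      simpa using this
    have hsqrt := hSd.sqrt (ne_of_gt hS)
    have hdiv := hasFDerivAt_div'' ((hPdiff k x).hasFDerivAt) hsqrt (ne_of_gt hs)
    show fderiv ℝ _ x (Pi.single k 1) = _
    rw [hdiv.fderiv]
    simp only [ContinuousLinearMap.smul_apply, ContinuousLinearMap.sub_apply,
      ContinuousLinearMap.sum_apply, smul_eq_mul]
    have h2sum : (∑ j, (2 * pd j u x) * fderiv ℝ (pd j u) x (Pi.single k 1))
        = 2 * ∑ j, pd j u x * fderiv ℝ (pd j u) x (Pi.single k 1) := by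
      rw [Finset.mul_sum]
      exact Finset.sum_congr rfl fun j _ => by ring
    rw [h2sum]
    set S := ∑ j, pd j u x ^ 2 with hSdef
    set R := ∑ j, pd j u x * fderiv ℝ (pd j u) x (Pi.single k 1) with hRdef
    set s := Real.sqrt S with hsdef
    have hsne : s ≠ 0 := hs.ne'
    rw [← hs2]
    field_simp
  have haNne : pd (Fin.last n) u x ≠ 0 := haN.ne'
  -- the Euler equation in algebraic form
  have hE : ∀ i : Fin n,
      pd (Fin.last n) u x * (∑ j, pd j u x * fderiv ℝ (pd i.castSucc u) x (Pi.single j 1))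
        = pd i.castSucc u x
          * (∑ j, pd j u x * fderiv ℝ (pd (Fin.last n) u) x (Pi.single j 1)) := by
    intro i
    have h0 := hEuler i x hx
    rw [hdF i (Fin.last n)] at h0
    have hsum : (∑ j : Fin n, F j x * pd j.castSucc (F i) x)
        = (∑ j : Fin n, pd j.castSucc u x *
            (pd (Fin.last n) u x * fderiv ℝ (pd i.castSucc u) x (Pi.single j.castSucc 1)
              - pd i.castSucc u x * fderiv ℝ (pd (Fin.last n) u) x (Pi.single j.castSucc 1)))
          / pd (Fin.last n) u x ^ 3 := by
      rw [Finset.sum_div]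
      refine Finset.sum_congr rfl fun j _ => ?_
      rw [hF j x, hdF i j.castSucc]
      field_simp
    rw [hsum] at h0
    have hexp : (∑ j : Fin n, pd j.castSucc u x *
            (pd (Fin.last n) u x * fderiv ℝ (pd i.castSucc u) x (Pi.single j.castSucc 1)
              - pd i.castSucc u x * fderiv ℝ (pd (Fin.last n) u) x (Pi.single j.castSucc 1)))
        = pd (Fin.last n) u x * (∑ j : Fin n,
              pd j.castSucc u x * fderiv ℝ (pd i.castSucc u) x (Pi.single j.castSucc 1))
          - pd i.castSucc u x * (∑ j : Fin n,
              pd j.castSucc u x * fderiv ℝ (pd (Fin.last n) u) x (Pi.single j.castSucc 1)) := by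
      rw [Finset.mul_sum, Finset.mul_sum, ← Finset.sum_sub_distrib]
      exact Finset.sum_congr rfl fun j _ => by ring
    rw [hexp] at h0
    rw [Fin.sum_univ_castSucc
        (f := fun j => pd j u x * fderiv ℝ (pd i.castSucc u) x (Pi.single j 1)),
      Fin.sum_univ_castSucc
        (f := fun j => pd j u x * fderiv ℝ (pd (Fin.last n) u) x (Pi.single j 1))]
    field_simp at h0
    have hcan : pd (Fin.last n) u x ^ 2 *
        (pd (Fin.last n) u x * ((∑ j : Fin n,
            pd j.castSucc u x * fderiv ℝ (pd i.castSucc u) x (Pi.single j.castSucc 1))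
          + pd (Fin.last n) u x * fderiv ℝ (pd i.castSucc u) x (Pi.single (Fin.last n) 1)))
        = pd (Fin.last n) u x ^ 2 *
        (pd i.castSucc u x * ((∑ j : Fin n,
            pd j.castSucc u x * fderiv ℝ (pd (Fin.last n) u) x (Pi.single j.castSucc 1))
          + pd (Fin.last n) u x * fderiv ℝ (pd (Fin.last n) u) x (Pi.single (Fin.last n) 1))) := by
      linear_combination (pd (Fin.last n) u x) ^ 2 * h0
    exact mul_left_cancel₀ (pow_ne_zero 2 haNne) hcan
  have e1 : (∑ i : Fin n, pd i.castSucc (F i) x)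
      = ∑ i : Fin n, (pd (Fin.last n) u x * fderiv ℝ (pd i.castSucc u) x (Pi.single i.castSucc 1)
          - pd i.castSucc u x * fderiv ℝ (pd (Fin.last n) u) x (Pi.single i.castSucc 1))
        / pd (Fin.last n) u x ^ 2 :=
    Finset.sum_congr rfl fun i _ => hdF i i.castSucc
  have e2 : (∑ k : Fin (n + 1),
        pd k (fun y => pd k u y / Real.sqrt (∑ j, pd j u y ^ 2)) x)
      = ∑ k : Fin (n + 1), ((∑ j, pd j u x ^ 2) * fderiv ℝ (pd k u) x (Pi.single k 1)
          - pd k u x * (∑ j, pd j u x * fderiv ℝ (pd j u) x (Pi.single k 1)))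
        / Real.sqrt (∑ j, pd j u x ^ 2) ^ 3 :=
    Finset.sum_congr rfl fun k _ => hdG k
  rw [e1, e2]
  exact key_alg (fun k => pd k u x) (fun i k => fderiv ℝ (pd i u) x (Pi.single k 1)) haN hE
end

section
/- Let W : ℝ → [0,∞) be smooth and u ∈ C²(Ω), Ω ⊆ ℝⁿ open, a solution of Δu = W'(u) with ∂u/∂xₙ > 0 satisfying the equipartition ½|∇u|² = W(u). Define F_i = (∂u/∂x_i)/(∂u/∂xₙ), i = 1,…,n−1. Then F satisfies ∂F_i/∂xₙ + Σ_{j=1}^{n−1} F_j ∂F_i/∂x_j = 0 for all i, and additionally Σ_{i=1}^{n−1} ∂F_i/∂x_i = 0. -/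
noncomputable def lap {n : ℕ} (f : (Fin n → ℝ) → ℝ) (x : Fin n → ℝ) : ℝ :=
  ∑ j, pd j (pd j f) x

section helpers
variable {m : ℕ} {x : Fin m → ℝ}

lemma contDiff_pd {f : (Fin m → ℝ) → ℝ} (hf : ContDiff ℝ (⊤ : ℕ∞) f) (j : Fin m) :
    ContDiff ℝ (⊤ : ℕ∞) (pd j f) := by
  have h1 : ContDiff ℝ (⊤ : ℕ∞) (fderiv ℝ f) := hf.fderiv_right (by simp)
  exact h1.clm_apply contDiff_const

lemma pd_congr {f g : (Fin m → ℝ) → ℝ} {x} (h : f =ᶠ[nhds x] g) (k : Fin m) :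
    pd k f x = pd k g x := by
  unfold pd; rw [h.fderiv_eq]

lemma pd_comm {f : (Fin m → ℝ) → ℝ} (hf : ContDiff ℝ (⊤ : ℕ∞) f) (i k : Fin m) (x) :
    pd i (pd k f) x = pd k (pd i f) x := by
  have hs : IsSymmSndFDerivAt ℝ f x := hf.contDiffAt.isSymmSndFDerivAt (by rw [minSmoothness_of_isRCLikeNormedField]; exact WithTop.coe_le_coe.mpr (le_top : (2 : ℕ∞) ≤ ⊤))
  have hd : DifferentiableAt ℝ (fderiv ℝ f) x :=
    ((hf.fderiv_right (m := (⊤ : ℕ∞)) (by simp)).differentiable (by simp)) x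
  have key : ∀ a b : Fin m, pd a (pd b f) x =
      fderiv ℝ (fderiv ℝ f) x (Pi.single a 1) (Pi.single b 1) := by
    intro a b
    unfold pd
    rw [fderiv_clm_apply hd (differentiableAt_const _)]
    simp
  rw [key, key, hs.eq]

lemma pd_mul {a b : (Fin m → ℝ) → ℝ} (ha : DifferentiableAt ℝ a x)
    (hb : DifferentiableAt ℝ b x) (k : Fin m) :
    pd k (fun y => a y * b y) x = pd k a x * b x + a x * pd k b x := by
  unfold pd
  rw [fderiv_fun_mul ha hb]
  simp only [ContinuousLinearMap.add_apply, ContinuousLinearMap.smul_apply, smul_eq_mul]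
  ring

lemma pd_inv {b : (Fin m → ℝ) → ℝ} (hb : DifferentiableAt ℝ b x) (hbx : b x ≠ 0) (k : Fin m) :
    pd k (fun y => (b y)⁻¹) x = -(b x ^ 2)⁻¹ * pd k b x := by
  unfold pd
  have h1 : HasFDerivAt (fun y => (b y)⁻¹) ((-(b x ^ 2)⁻¹) • fderiv ℝ b x) x :=
    (hasDerivAt_inv hbx).comp_hasFDerivAt x hb.hasFDerivAt
  rw [h1.fderiv]
  simp

lemma pd_div {a b : (Fin m → ℝ) → ℝ} (ha : DifferentiableAt ℝ a x)
    (hb : DifferentiableAt ℝ b x) (hbx : b x ≠ 0) (k : Fin m) :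
    pd k (fun y => a y / b y) x
      = (pd k a x * b x - a x * pd k b x) / (b x) ^ 2 := by
  simp only [div_eq_mul_inv]
  rw [pd_mul (b := fun y => (b y)⁻¹) ha (hb.inv hbx), pd_inv hb hbx]
  field_simp
  ring

lemma pd_sum {ι : Type*} (s : Finset ι) {f : ι → (Fin m → ℝ) → ℝ}
    (hf : ∀ i ∈ s, DifferentiableAt ℝ (f i) x) (k : Fin m) :
    pd k (fun y => ∑ i ∈ s, f i y) x = ∑ i ∈ s, pd k (f i) x := by
  unfold pd
  rw [fderiv_fun_sum hf]
  simp

lemma pd_const_mul {a : (Fin m → ℝ) → ℝ} (ha : DifferentiableAt ℝ a x) (c : ℝ) (k : Fin m) :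
    pd k (fun y => c * a y) x = c * pd k a x := by
  unfold pd
  rw [fderiv_const_mul ha]
  simp

lemma pd_sq {a : (Fin m → ℝ) → ℝ} (ha : DifferentiableAt ℝ a x) (k : Fin m) :
    pd k (fun y => a y ^ 2) x = 2 * a x * pd k a x := by
  have : (fun y => a y ^ 2) = fun y => a y * a y := by ext y; ring
  rw [this, pd_mul ha ha]; ring

lemma pd_comp {W : ℝ → ℝ} {u : (Fin m → ℝ) → ℝ} (hW : DifferentiableAt ℝ W (u x))
    (hu : DifferentiableAt ℝ u x) (k : Fin m) :
    pd k (fun y => W (u y)) x = deriv W (u x) * pd k u x := by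
  unfold pd
  have h1 : HasFDerivAt (fun y => W (u y)) ((deriv W (u x)) • fderiv ℝ u x) x :=
    hW.hasDerivAt.comp_hasFDerivAt x hu.hasFDerivAt
  rw [h1.fderiv]
  simp

end helpers

theorem stmt_4 {n : ℕ} (hn : 1 ≤ n) (Ω : Set (Fin (n + 1) → ℝ)) (hΩ : IsOpen Ω)
    (W : ℝ → ℝ) (hW : ContDiff ℝ (⊤ : ℕ∞) W) (hWnonneg : ∀ t, 0 ≤ W t)
    (u : (Fin (n + 1) → ℝ) → ℝ) (hu : ContDiff ℝ (⊤ : ℕ∞) u)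
    (hAC : ∀ x ∈ Ω, lap u x = deriv W (u x))
    (hmono : ∀ x ∈ Ω, 0 < pd (Fin.last n) u x)
    (hequi : ∀ x ∈ Ω, (1 / 2) * ∑ j, (pd j u x) ^ 2 = W (u x))
    (F : Fin n → (Fin (n + 1) → ℝ) → ℝ)
    (hF : ∀ i x, F i x = pd (Fin.castSucc i) u x / pd (Fin.last n) u x) :
    (∀ i : Fin n, ∀ x ∈ Ω,
      pd (Fin.last n) (F i) x
        + ∑ j : Fin n, F j x * pd (Fin.castSucc j) (F i) x = 0) ∧
    (∀ x ∈ Ω, (∑ i : Fin n, pd (Fin.castSucc i) (F i) x) = 0) := by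
  have hv : ∀ j, ContDiff ℝ (⊤ : ℕ∞) (pd j u) := fun j => contDiff_pd hu j
  have dv : ∀ (j : Fin (n+1)) (x), DifferentiableAt ℝ (pd j u) x :=
    fun j x => ((hv j).differentiable (by simp)) x
  -- differentiated equipartition
  have keyA : ∀ x ∈ Ω, ∀ k : Fin (n+1),
      ∑ j, pd j u x * pd k (pd j u) x = lap u x * pd k u x := by
    intro x hx k
    have heq : (fun y => (1/2 : ℝ) * ∑ j, (pd j u y) ^ 2) =ᶠ[nhds x] fun y => W (u y) :=
      Filter.eventuallyEq_of_mem (hΩ.mem_nhds hx) hequi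
    have h1 := pd_congr heq k
    rw [pd_const_mul (by
        exact DifferentiableAt.fun_sum fun j _ => (dv j x).pow 2) _ k,
      pd_sum (f := fun j y => pd j u y ^ 2) _ (fun j _ => (dv j x).pow 2) k] at h1
    simp only [pd_sq (dv _ x) k] at h1
    rw [pd_comp ((hW.differentiable (by simp)).differentiableAt)
      ((hu.differentiable (by simp)) x) k] at h1
    rw [← hAC x hx] at h1
    rw [← h1, Finset.mul_sum]
    congr 1
    ext j
    ring
  have keyB : ∀ x ∈ Ω, ∀ i : Fin (n+1),
      ∑ k, pd k u x * pd k (pd i u) x = lap u x * pd i u x := by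
    intro x hx i
    have : ∀ k, pd k (pd i u) x = pd i (pd k u) x := fun k => pd_comm hu k i x
    simp only [this]
    simpa using keyA x hx i
  -- derivative of F
  have hFfun : ∀ i : Fin n, F i = fun y => pd (Fin.castSucc i) u y / pd (Fin.last n) u y :=
    fun i => funext fun y => hF i y
  have hpdF : ∀ (i : Fin n) (k : Fin (n+1)), ∀ x ∈ Ω, pd k (F i) x =
      (pd k (pd (Fin.castSucc i) u) x * pd (Fin.last n) u x
        - pd (Fin.castSucc i) u x * pd k (pd (Fin.last n) u) x) / (pd (Fin.last n) u x) ^ 2 := by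
    intro i k x hx
    rw [hFfun i]
    exact pd_div (dv _ x) (dv _ x) (hmono x hx).ne' k
  constructor
  · intro i x hx
    have hb : pd (Fin.last n) u x ≠ 0 := (hmono x hx).ne'
    set b := pd (Fin.last n) u x with hbdef
    set a := pd (Fin.castSucc i) u x with hadef
    set L := lap u x with hLdef
    -- abbreviations
    have hsplitA : ∑ j : Fin n, pd (Fin.castSucc j) u x * pd (Fin.castSucc j) (pd (Fin.castSucc i) u) x
        = L * a - b * pd (Fin.last n) (pd (Fin.castSucc i) u) x := by
      have := keyB x hx (Fin.castSucc i)
      rw [Fin.sum_univ_castSucc] at this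
      linarith [this]
    have hsplitB : ∑ j : Fin n, pd (Fin.castSucc j) u x * pd (Fin.castSucc j) (pd (Fin.last n) u) x
        = L * b - b * pd (Fin.last n) (pd (Fin.last n) u) x := by
      have := keyB x hx (Fin.last n)
      rw [Fin.sum_univ_castSucc] at this
      linarith [this]
    have hsum : ∑ j : Fin n, F j x * pd (Fin.castSucc j) (F i) x
        = (b * (∑ j : Fin n, pd (Fin.castSucc j) u x * pd (Fin.castSucc j) (pd (Fin.castSucc i) u) x)
          - a * (∑ j : Fin n, pd (Fin.castSucc j) u x * pd (Fin.castSucc j) (pd (Fin.last n) u) x))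
          / b ^ 3 := by
      rw [eq_div_iff (pow_ne_zero 3 hb)]
      rw [Finset.sum_mul, Finset.mul_sum, Finset.mul_sum, ← Finset.sum_sub_distrib]
      apply Finset.sum_congr rfl
      intro j _
      rw [hF j x, hpdF i (Fin.castSucc j) x hx]
      simp only [← hbdef, ← hadef]
      field_simp
    rw [hsum, hsplitA, hsplitB, hpdF i (Fin.last n) x hx]
    simp only [← hbdef, ← hadef]
    field_simp
    ring
  · intro x hx
    have hb : pd (Fin.last n) u x ≠ 0 := (hmono x hx).ne'
    set b := pd (Fin.last n) u x with hbdef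
    set L := lap u x with hLdef
    have hdiag : ∑ j : Fin n, pd (Fin.castSucc j) (pd (Fin.castSucc j) u) x
        = L - pd (Fin.last n) (pd (Fin.last n) u) x := by
      have : L = ∑ j, pd j (pd j u) x := rfl
      rw [this, Fin.sum_univ_castSucc]
      ring
    have hmix : ∑ j : Fin n, pd (Fin.castSucc j) u x * pd (Fin.last n) (pd (Fin.castSucc j) u) x
        = L * b - b * pd (Fin.last n) (pd (Fin.last n) u) x := by
      have := keyA x hx (Fin.last n)
      rw [Fin.sum_univ_castSucc] at this
      linarith [this]
    have hterm : ∀ j : Fin n, pd (Fin.castSucc j) (F j) x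
        = (pd (Fin.castSucc j) (pd (Fin.castSucc j) u) x * b
            - pd (Fin.castSucc j) u x * pd (Fin.last n) (pd (Fin.castSucc j) u) x) / b ^ 2 := by
      intro j
      rw [hpdF j (Fin.castSucc j) x hx, pd_comm hu (Fin.castSucc j) (Fin.last n) x]
    rw [Finset.sum_congr rfl (fun j _ => hterm j)]
    rw [← Finset.sum_div, Finset.sum_sub_distrib, ← Finset.sum_mul, hdiag, hmix]
    field_simp
    ring
end

section
/- Let u ∈ C²(Ω), Ω ⊆ ℝⁿ open, solving Δu = W'(u) with ∂u/∂xₙ > 0 and satisfying ½|∇u|² = W(u), where W : ℝ → [0,∞) is smooth. Then div(∇u/|∇u|) = 0 on Ω, i.e., all level sets of u have zero mean curvature. -/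
theorem stmt_5 {n : ℕ} (hn : 1 ≤ n) (Ω : Set (Fin (n + 1) → ℝ)) (hΩ : IsOpen Ω)
    (W : ℝ → ℝ) (hW : ContDiff ℝ (⊤ : ℕ∞) W) (hWnonneg : ∀ t, 0 ≤ W t)
    (u : (Fin (n + 1) → ℝ) → ℝ) (hu : ContDiff ℝ (⊤ : ℕ∞) u)
    (hAC : ∀ x ∈ Ω, lap u x = deriv W (u x))
    (hmono : ∀ x ∈ Ω, 0 < pd (Fin.last n) u x)
    (hequi : ∀ x ∈ Ω, (1 / 2) * ∑ j, (pd j u x) ^ 2 = W (u x)) :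
    ∀ x ∈ Ω,
      (∑ i : Fin (n + 1),
        pd i (fun y => pd i u y / Real.sqrt (∑ j, (pd j u y) ^ 2)) x) = 0 := by
  intro x hx
  -- smoothness of partial derivatives
  have hpd : ∀ j : Fin (n + 1), ContDiff ℝ (⊤ : ℕ∞) (pd j u) := by
    intro j
    have h1 : ContDiff ℝ (⊤ : ℕ∞) (fderiv ℝ u) := hu.fderiv_right (by simp)
    exact h1.clm_apply contDiff_const
  set g : (Fin (n + 1) → ℝ) → ℝ := fun y => ∑ j, (pd j u y) ^ 2 with hgdef
  have hgsmooth : ContDiff ℝ (⊤ : ℕ∞) g := by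
    apply ContDiff.sum
    intro j _
    exact (hpd j).pow 2
  -- positivity
  have hg0 : 0 < g x := by
    have h1 := hmono x hx
    have : (pd (Fin.last n) u x) ^ 2 ≤ g x := by
      apply Finset.single_le_sum (f := fun j => (pd j u x) ^ 2)
      · intro j _; positivity
      · exact Finset.mem_univ _
    nlinarith
  set s : ℝ := Real.sqrt (g x) with hsdef
  have hs : 0 < s := Real.sqrt_pos.mpr hg0
  have hs2 : s ^ 2 = g x := Real.sq_sqrt hg0.le
  -- g = 2 * W ∘ u on Ω
  have hEq : g =ᶠ[nhds x] fun y => 2 * W (u y) := by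
    filter_upwards [hΩ.mem_nhds hx] with y hy
    have := hequi y hy
    simp only [hgdef]
    linarith
  -- fderiv of g at x
  have hWd : HasDerivAt W (deriv W (u x)) (u x) :=
    ((hW.differentiable (by simp)) (u x)).hasDerivAt
  have hud : HasFDerivAt u (fderiv ℝ u x) x :=
    ((hu.differentiable (by simp)) x).hasFDerivAt
  have h2W : HasFDerivAt (fun y => 2 * W (u y))
      ((2 * deriv W (u x)) • fderiv ℝ u x) x := by
    have := (hWd.comp_hasFDerivAt x hud).const_mul 2
    exact this.congr_fderiv (by rw [smul_smul])
  have hg : HasFDerivAt g ((2 * deriv W (u x)) • fderiv ℝ u x) x :=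
    h2W.congr_of_eventuallyEq hEq
  -- fderiv of sqrt of g
  have hsqrt : HasFDerivAt (fun y => Real.sqrt (g y))
      ((1 / (2 * s)) • ((2 * deriv W (u x)) • fderiv ℝ u x)) x :=
    hg.sqrt hg0.ne'
  -- fderiv of inverse of sqrt g
  have hinv : HasFDerivAt (fun y => (Real.sqrt (g y))⁻¹)
      ((-(s ^ 2)⁻¹) • ((1 / (2 * s)) • ((2 * deriv W (u x)) • fderiv ℝ u x))) x :=
    (hasDerivAt_inv hs.ne').comp_hasFDerivAt x hsqrt
  -- now compute each summand
  have key : ∀ i : Fin (n + 1),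
      pd i (fun y => pd i u y / Real.sqrt (∑ j, (pd j u y) ^ 2)) x
        = pd i u x * (-(s ^ 2)⁻¹ * ((1 / (2 * s)) * (2 * deriv W (u x) * pd i u x)))
          + s⁻¹ * pd i (pd i u) x := by
    intro i
    have hA : HasFDerivAt (pd i u) (fderiv ℝ (pd i u) x) x :=
      (((hpd i).differentiable (by simp)) x).hasFDerivAt
    have hmul : HasFDerivAt (fun y => pd i u y * (Real.sqrt (g y))⁻¹)
        (pd i u x • ((-(s ^ 2)⁻¹) • ((1 / (2 * s)) • ((2 * deriv W (u x)) • fderiv ℝ u x)))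
          + (Real.sqrt (g x))⁻¹ • fderiv ℝ (pd i u) x) x := hA.mul hinv
    have hfun : (fun y => pd i u y / Real.sqrt (∑ j, (pd j u y) ^ 2))
        = (fun y => pd i u y * (Real.sqrt (g y))⁻¹) := by
      funext y; rw [div_eq_mul_inv]
    rw [pd, hfun, hmul.fderiv]
    have hux : fderiv ℝ u x (Pi.single i 1) = pd i u x := rfl
    simp only [ContinuousLinearMap.add_apply, ContinuousLinearMap.smul_apply,
      smul_eq_mul, hux]
    rw [pd]
    ring_nf
    rfl
  rw [Finset.sum_congr rfl fun i _ => key i]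
  rw [Finset.sum_add_distrib]
  have hsum1 : ∑ i : Fin (n + 1),
      pd i u x * (-(s ^ 2)⁻¹ * ((1 / (2 * s)) * (2 * deriv W (u x) * pd i u x)))
      = -(s ^ 2)⁻¹ * (1 / (2 * s)) * (2 * deriv W (u x)) * g x := by
    rw [hgdef, Finset.mul_sum]
    apply Finset.sum_congr rfl
    intro i _
    ring
  have hsum2 : ∑ i : Fin (n + 1), s⁻¹ * pd i (pd i u) x = s⁻¹ * deriv W (u x) := by
    rw [← Finset.mul_sum]
    congr 1
    exact hAC x hx
  rw [hsum1, hsum2, hs2]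
  field_simp
  ring
end

section
/- Let W : ℝ → [0,∞) be smooth, u : ℝⁿ → ℝ smooth with ∂u/∂xₙ > 0 and ½|∇u|² = W(u). Suppose G : ℝ → ℝ satisfies G'(t) = 1/√(2W(t)) on the range of u (possible since W > 0 there), with smooth inverse g = G⁻¹. If G(u(x)) = |x − x₀| + c for some x₀ ∈ ℝⁿ, c ∈ ℝ, and u also solves Δu = W'(u) away from x₀, then a contradiction follows; hence u cannot be a radial function of this form. -/
theorem stmt_11 {n : ℕ} (hn : 1 ≤ n)
    (W : ℝ → ℝ) (hW : ContDiff ℝ (⊤ : ℕ∞) W) (hWnonneg : ∀ t, 0 ≤ W t)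
    (u : (Fin (n + 1) → ℝ) → ℝ) (hu : ContDiff ℝ (⊤ : ℕ∞) u)
    (hmono : ∀ x, 0 < pd (Fin.last n) u x)
    (hequi : ∀ x, (1 / 2) * ∑ j, (pd j u x) ^ 2 = W (u x))
    (hWpos : ∀ x, 0 < W (u x))
    (G : ℝ → ℝ) (hG : ∀ t, HasDerivAt G (1 / Real.sqrt (2 * W t)) t)
    (g : ℝ → ℝ) (hginv : ∀ t, g (G t) = t) (hginv' : ∀ s, G (g s) = s)
    (hgsmooth : ContDiff ℝ (⊤ : ℕ∞) g)
    (x₀ : Fin (n + 1) → ℝ) (c : ℝ)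
    (hrad : ∀ x, G (u x) = Real.sqrt (∑ i, (x i - x₀ i) ^ 2) + c)
    (hAC : ∀ x, x ≠ x₀ → lap u x = deriv W (u x)) :
    False := by
  classical
  set e : Fin (n + 1) → ℝ := Pi.single (Fin.last n) 1 with he
  -- G is monotone
  have hGdiff : Differentiable ℝ G := fun t => (hG t).differentiableAt
  have hGmono : Monotone G := by
    apply monotone_of_deriv_nonneg hGdiff
    intro t
    rw [(hG t).deriv]
    positivity
  -- φ(t) = u (x₀ - t • e) is strictly decreasing
  have hudiff : Differentiable ℝ u := hu.differentiable (by simp)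
  set φ : ℝ → ℝ := fun t => u (x₀ - t • e) with hφ
  have hφd : ∀ t : ℝ, HasDerivAt φ (-(pd (Fin.last n) u (x₀ - t • e))) t := by
    intro t
    have hγ : HasDerivAt (fun t : ℝ => x₀ - t • e) (-e) t := by
      simpa using ((hasDerivAt_id t).smul_const e).const_sub x₀
    have := ((hudiff (x₀ - t • e)).hasFDerivAt).comp_hasDerivAt t hγ
    simpa [pd, map_neg, he, hφ, Function.comp_def] using this
  have hanti : StrictAnti φ := by
    apply strictAnti_of_deriv_neg
    intro t
    rw [(hφd t).deriv]
    simpa using hmono (x₀ - t • e)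
  have hlt : φ 1 < φ 0 := hanti (by norm_num)
  have h0 : φ 0 = u x₀ := by simp [hφ]
  have hGle : G (φ 1) ≤ G (φ 0) := hGmono hlt.le
  have hsum1 : ∑ i, ((x₀ - (1 : ℝ) • e) i - x₀ i) ^ 2 = 1 := by
    simp [he, Pi.single_apply]
  have hsum0 : ∑ i : Fin (n+1), (x₀ i - x₀ i) ^ 2 = 0 := by simp
  have h1 : G (φ 1) = 1 + c := by
    rw [hφ]
    rw [hrad (x₀ - (1:ℝ) • e), hsum1]
    norm_num
  have h0' : G (φ 0) = c := by
    rw [h0, hrad x₀, hsum0]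
    simp
  rw [h1, h0'] at hGle
  linarith
end

section
/- Let c₁, c₂, c̃₁, c̃₂, β, γ, λ, ξ ∈ ℝ with c₁β + c₂γ = 0 and λβ + ξγ = 0, let g : ℝ → ℝ be smooth, a, b : ℝ → ℝ smooth with A' = a. Define u₁(x,y,t) = c₁ g(βx + γy − (βc̃₁ + γc̃₂)t) + λA(t) + c̃₁, u₂(x,y,t) = c₂ g(βx + γy − (βc̃₁ + γc̃₂)t) + ξA(t) + c̃₂, and p(x,y,t) = −a(t)(λx + ξy) + b(t). Then (u₁,u₂) satisfies the incompressible 2D Euler equations: u₁ₜ + u₁u₁ₓ + u₂u₁ᵧ = −pₓ, u₂ₜ + u₁u₂ₓ + u₂u₂ᵧ = −pᵧ, and u₁ₓ + u₂ᵧ = 0. -/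
open ContinuousLinearMap in
lemma pd_gen (c lam c' β γ k : ℝ) (g A a : ℝ → ℝ)
    (hg : Differentiable ℝ g) (hA : ∀ t, HasDerivAt A (a t) t)
    (u : (Fin 3 → ℝ) → ℝ)
    (hu : ∀ X, u X = c * g (β * X 0 + γ * X 1 - k * X 2) + lam * A (X 2) + c')
    (X : Fin 3 → ℝ) :
    pd 0 u X = c * deriv g (β * X 0 + γ * X 1 - k * X 2) * β ∧
    pd 1 u X = c * deriv g (β * X 0 + γ * X 1 - k * X 2) * γ ∧
    pd 2 u X = c * deriv g (β * X 0 + γ * X 1 - k * X 2) * (-k) + lam * a (X 2) := by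
  set s := β * X 0 + γ * X 1 - k * X 2 with hs
  set L : (Fin 3 → ℝ) →L[ℝ] ℝ :=
    β • proj 0 + γ • proj 1 + (-k) • proj 2 with hL
  have hfun : (fun Y : Fin 3 → ℝ => β * Y 0 + γ * Y 1 - k * Y 2) = ⇑L := by
    funext Y
    simp [hL, proj_apply]
    ring
  have hφ : HasFDerivAt (fun Y : Fin 3 → ℝ => β * Y 0 + γ * Y 1 - k * Y 2) L X := by
    rw [hfun]; exact L.hasFDerivAt
  have hgφ : HasFDerivAt (fun Y : Fin 3 → ℝ => g (β * Y 0 + γ * Y 1 - k * Y 2))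
      (deriv g s • L) X := (hg s).hasDerivAt.comp_hasFDerivAt X hφ
  have hproj : HasFDerivAt (fun Y : Fin 3 → ℝ => Y 2)
      (proj 2 : (Fin 3 → ℝ) →L[ℝ] ℝ) X := by
    exact hasFDerivAt_apply 2 X
  have hAx : HasFDerivAt (fun Y : Fin 3 → ℝ => A (Y 2))
      (a (X 2) • (proj 2 : (Fin 3 → ℝ) →L[ℝ] ℝ)) X :=
    (hA (X 2)).comp_hasFDerivAt X hproj
  have hu' : HasFDerivAt u
      (c • (deriv g s • L) + lam • (a (X 2) • (proj 2 : (Fin 3 → ℝ) →L[ℝ] ℝ))) X := by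
    have h := ((hgφ.const_smul c).add (hAx.const_smul lam)).add_const c'
    refine h.congr_of_eventuallyEq (Filter.Eventually.of_forall fun Y => ?_)
    rw [hu Y]
    simp [smul_eq_mul]
  have hfd := hu'.fderiv
  refine ⟨?_, ?_, ?_⟩ <;>
  · simp only [pd, hfd, add_apply, smul_apply, proj_apply, smul_eq_mul, hL]
    simp [Pi.single_apply]
    ring

open ContinuousLinearMap in
lemma pd_p (lam ξ : ℝ) (a b : ℝ → ℝ)
    (haD : Differentiable ℝ a) (hbD : Differentiable ℝ b)
    (p : (Fin 3 → ℝ) → ℝ)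
    (hp : ∀ X, p X = -(a (X 2)) * (lam * X 0 + ξ * X 1) + b (X 2)) (X : Fin 3 → ℝ) :
    pd 0 p X = -(a (X 2)) * lam ∧ pd 1 p X = -(a (X 2)) * ξ := by
  have hπ2 : HasFDerivAt (fun Y : Fin 3 → ℝ => Y 2)
      (proj 2 : (Fin 3 → ℝ) →L[ℝ] ℝ) X := hasFDerivAt_apply 2 X
  have hF : HasFDerivAt (fun Y : Fin 3 → ℝ => -(a (Y 2)))
      (-(deriv a (X 2) • (proj 2 : (Fin 3 → ℝ) →L[ℝ] ℝ))) X :=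
    ((haD (X 2)).hasDerivAt.comp_hasFDerivAt X hπ2).neg
  have hGfun : (fun Y : Fin 3 → ℝ => lam * Y 0 + ξ * Y 1)
      = ⇑(lam • proj 0 + ξ • proj 1 : (Fin 3 → ℝ) →L[ℝ] ℝ) := by
    funext Y; simp [ContinuousLinearMap.proj_apply]
  have hG : HasFDerivAt (fun Y : Fin 3 → ℝ => lam * Y 0 + ξ * Y 1)
      (lam • proj 0 + ξ • proj 1 : (Fin 3 → ℝ) →L[ℝ] ℝ) X := by
    rw [hGfun]; exact ContinuousLinearMap.hasFDerivAt _
  have hb2 : HasFDerivAt (fun Y : Fin 3 → ℝ => b (Y 2))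
      (deriv b (X 2) • (proj 2 : (Fin 3 → ℝ) →L[ℝ] ℝ)) X :=
    (hbD (X 2)).hasDerivAt.comp_hasFDerivAt X hπ2
  have hp' : HasFDerivAt p
      ((-(a (X 2)) • (lam • proj 0 + ξ • proj 1 : (Fin 3 → ℝ) →L[ℝ] ℝ)
        + (lam * X 0 + ξ * X 1) • (-(deriv a (X 2) • (proj 2 : (Fin 3 → ℝ) →L[ℝ] ℝ))))
        + deriv b (X 2) • (proj 2 : (Fin 3 → ℝ) →L[ℝ] ℝ)) X := by
    have h := (hF.mul hG).add hb2
    refine h.congr_of_eventuallyEq (Filter.Eventually.of_forall fun Y => ?_)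
    rw [hp Y]
    rfl
  have hfd := hp'.fderiv
  constructor <;>
  · simp only [pd, hfd, ContinuousLinearMap.add_apply, ContinuousLinearMap.smul_apply,
      ContinuousLinearMap.neg_apply, ContinuousLinearMap.proj_apply, smul_eq_mul]
    simp [Pi.single_apply]

/-- Coordinates: `0 = x`, `1 = y`, `2 = t`. -/
theorem stmt_13 (c₁ c₂ c₁' c₂' β γ lam ξ : ℝ)
    (hc : c₁ * β + c₂ * γ = 0) (hlx : lam * β + ξ * γ = 0)
    (g : ℝ → ℝ) (hg : ContDiff ℝ (⊤ : ℕ∞) g)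
    (a b A : ℝ → ℝ) (haC : ContDiff ℝ (⊤ : ℕ∞) a) (hbC : ContDiff ℝ (⊤ : ℕ∞) b)
    (hA : ∀ t, HasDerivAt A (a t) t)
    (u₁ u₂ p : (Fin 3 → ℝ) → ℝ)
    (hu₁ : ∀ X, u₁ X = c₁ * g (β * X 0 + γ * X 1 - (β * c₁' + γ * c₂') * X 2)
        + lam * A (X 2) + c₁')
    (hu₂ : ∀ X, u₂ X = c₂ * g (β * X 0 + γ * X 1 - (β * c₁' + γ * c₂') * X 2)
        + ξ * A (X 2) + c₂')
    (hp : ∀ X, p X = -(a (X 2)) * (lam * X 0 + ξ * X 1) + b (X 2)) :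
    (∀ X, pd 2 u₁ X + u₁ X * pd 0 u₁ X + u₂ X * pd 1 u₁ X = -(pd 0 p X)) ∧
    (∀ X, pd 2 u₂ X + u₁ X * pd 0 u₂ X + u₂ X * pd 1 u₂ X = -(pd 1 p X)) ∧
    (∀ X, pd 0 u₁ X + pd 1 u₂ X = 0) := by
  have hgD : Differentiable ℝ g := hg.differentiable (by simp)
  refine ⟨fun X => ?_, fun X => ?_, fun X => ?_⟩ <;>
  · obtain ⟨h10, h11, h12⟩ := pd_gen c₁ lam c₁' β γ _ g A a hgD hA u₁ hu₁ X
    obtain ⟨h20, h21, h22⟩ := pd_gen c₂ ξ c₂' β γ _ g A a hgD hA u₂ hu₂ X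
    obtain ⟨hp0, hp1⟩ := pd_p lam ξ a b (haC.differentiable (by simp)) (hbC.differentiable (by simp)) p hp X
    set s := β * X 0 + γ * X 1 - (β * c₁' + γ * c₂') * X 2
    first
    | (rw [hu₁ X, hu₂ X, h12, h10, h11, hp0]
       linear_combination (c₁ * deriv g s * g s) * hc + (c₁ * deriv g s * A (X 2)) * hlx)
    | (rw [hu₁ X, hu₂ X, h22, h20, h21, hp1]
       linear_combination (c₂ * deriv g s * g s) * hc + (c₂ * deriv g s * A (X 2)) * hlx)
    | (rw [h10, h21]; linear_combination deriv g s * hc)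
end

section
/- Let c₁, c₂, c̃₁, c̃₂, k, l ∈ ℝ, a, A, G : ℝ → ℝ smooth with A' = a. Define u₁(x,y,z,t) = G([kc̃₁ + lc̃₂]t + [kc₁ + lc₂]x − ky − lz) − A(t), u₂ = c₁u₁ + c̃₁, u₃ = c₂u₁ + c̃₂, and p(x,y,z,t) = a(t)(x + c₁y + c₂z). Then (u₁,u₂,u₃) solves the incompressible 3D Euler equations with pressure p and satisfies div u = 0. -/
/-- Coordinates: `0 = x`, `1 = y`, `2 = z`, `3 = t`. -/
theorem stmt_15 (c₁ c₂ c₁' c₂' k l : ℝ)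
    (a A G : ℝ → ℝ) (haC : ContDiff ℝ (⊤ : ℕ∞) a) (hGC : ContDiff ℝ (⊤ : ℕ∞) G)
    (hA : ∀ t, HasDerivAt A (a t) t)
    (u₁ u₂ u₃ p : (Fin 4 → ℝ) → ℝ)
    (hu₁ : ∀ X, u₁ X = G ((k * c₁' + l * c₂') * X 3 + (k * c₁ + l * c₂) * X 0
        - k * X 1 - l * X 2) - A (X 3))
    (hu₂ : ∀ X, u₂ X = c₁ * u₁ X + c₁')
    (hu₃ : ∀ X, u₃ X = c₂ * u₁ X + c₂')
    (hp : ∀ X, p X = a (X 3) * (X 0 + c₁ * X 1 + c₂ * X 2)) :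
    (∀ X, pd 3 u₁ X + u₁ X * pd 0 u₁ X + u₂ X * pd 1 u₁ X + u₃ X * pd 2 u₁ X
        = -(pd 0 p X)) ∧
    (∀ X, pd 3 u₂ X + u₁ X * pd 0 u₂ X + u₂ X * pd 1 u₂ X + u₃ X * pd 2 u₂ X
        = -(pd 1 p X)) ∧
    (∀ X, pd 3 u₃ X + u₁ X * pd 0 u₃ X + u₂ X * pd 1 u₃ X + u₃ X * pd 2 u₃ X
        = -(pd 2 p X)) ∧
    (∀ X, pd 0 u₁ X + pd 1 u₂ X + pd 2 u₃ X = 0) := by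
  have hu₁f : u₁ = fun X => G ((k * c₁' + l * c₂') * X 3 + (k * c₁ + l * c₂) * X 0
      - k * X 1 - l * X 2) - A (X 3) := funext hu₁
  have hu₂f : u₂ = fun X => c₁ * u₁ X + c₁' := funext hu₂
  have hu₃f : u₃ = fun X => c₂ * u₁ X + c₂' := funext hu₃
  have hpf : p = fun X => a (X 3) * (X 0 + c₁ * X 1 + c₂ * X 2) := funext hp
  set φ : (Fin 4 → ℝ) → ℝ := fun X => (k * c₁' + l * c₂') * X 3 + (k * c₁ + l * c₂) * X 0
      - k * X 1 - l * X 2 with hφ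
  have hpr : ∀ (i : Fin 4) (X : Fin 4 → ℝ),
      HasFDerivAt (fun Y : Fin 4 → ℝ => Y i)
        (ContinuousLinearMap.proj (R := ℝ) (φ := fun _ : Fin 4 => ℝ) i) X :=
    fun i X => (ContinuousLinearMap.proj (R := ℝ) (φ := fun _ : Fin 4 => ℝ) i).hasFDerivAt
  have hφd : ∀ X, HasFDerivAt φ
      ((k * c₁' + l * c₂') • ContinuousLinearMap.proj (R := ℝ) (φ := fun _ : Fin 4 => ℝ) 3
        + (k * c₁ + l * c₂) • ContinuousLinearMap.proj 0
        - k • ContinuousLinearMap.proj 1 - l • ContinuousLinearMap.proj 2) X := by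
    intro X
    exact ((((hpr 3 X).const_mul _).add ((hpr 0 X).const_mul _)).sub
      ((hpr 1 X).const_mul k)).sub ((hpr 2 X).const_mul l)
  have hGd : ∀ s, HasDerivAt G (deriv G s) s :=
    fun s => (hGC.differentiable (by simp) s).hasDerivAt
  have had : ∀ s, HasDerivAt a (deriv a s) s :=
    fun s => (haC.differentiable (by simp) s).hasDerivAt
  have hu₁d : ∀ X, HasFDerivAt u₁
      (deriv G (φ X) • ((k * c₁' + l * c₂') • ContinuousLinearMap.proj (R := ℝ)
          (φ := fun _ : Fin 4 => ℝ) 3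
        + (k * c₁ + l * c₂) • ContinuousLinearMap.proj 0
        - k • ContinuousLinearMap.proj 1 - l • ContinuousLinearMap.proj 2)
        - a (X 3) • ContinuousLinearMap.proj 3) X := by
    intro X
    rw [hu₁f]
    exact ((hGd (φ X)).comp_hasFDerivAt X (hφd X)).sub
      ((hA (X 3)).comp_hasFDerivAt X (hpr 3 X))
  -- values of pd for u₁
  have h0 : ∀ X, pd 0 u₁ X = deriv G (φ X) * (k * c₁ + l * c₂) := by
    intro X
    simp [pd, (hu₁d X).fderiv, Pi.single_apply]
  have h1 : ∀ X, pd 1 u₁ X = deriv G (φ X) * (-k) := by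
    intro X
    simp [pd, (hu₁d X).fderiv, Pi.single_apply]
  have h2 : ∀ X, pd 2 u₁ X = deriv G (φ X) * (-l) := by
    intro X
    simp [pd, (hu₁d X).fderiv, Pi.single_apply]
  have h3 : ∀ X, pd 3 u₁ X = deriv G (φ X) * (k * c₁' + l * c₂') - a (X 3) := by
    intro X
    simp [pd, (hu₁d X).fderiv, Pi.single_apply]
  -- pd for u₂, u₃
  have hu₂pd : ∀ (i : Fin 4) X, pd i u₂ X = c₁ * pd i u₁ X := by
    intro i X
    have : HasFDerivAt u₂ (c₁ • (fderiv ℝ u₁ X)) X := by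
      rw [hu₂f]; exact (((hu₁d X).const_mul c₁).add_const c₁').congr_fderiv
        (by rw [(hu₁d X).fderiv])
    simp [pd, this.fderiv]
  have hu₃pd : ∀ (i : Fin 4) X, pd i u₃ X = c₂ * pd i u₁ X := by
    intro i X
    have : HasFDerivAt u₃ (c₂ • (fderiv ℝ u₁ X)) X := by
      rw [hu₃f]; exact (((hu₁d X).const_mul c₂).add_const c₂').congr_fderiv
        (by rw [(hu₁d X).fderiv])
    simp [pd, this.fderiv]
  -- pd for p
  have hpd : ∀ X, HasFDerivAt p
      (a (X 3) • (ContinuousLinearMap.proj (R := ℝ) (φ := fun _ : Fin 4 => ℝ) 0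
          + c₁ • ContinuousLinearMap.proj 1 + c₂ • ContinuousLinearMap.proj 2)
        + (X 0 + c₁ * X 1 + c₂ * X 2) • (deriv a (X 3) • ContinuousLinearMap.proj 3)) X := by
    intro X
    rw [hpf]
    exact ((had (X 3)).comp_hasFDerivAt X (hpr 3 X)).mul
      (((hpr 0 X).add ((hpr 1 X).const_mul c₁)).add ((hpr 2 X).const_mul c₂))
  have hp0 : ∀ X, pd 0 p X = a (X 3) := by
    intro X; simp [pd, (hpd X).fderiv, Pi.single_apply]
  have hp1 : ∀ X, pd 1 p X = a (X 3) * c₁ := by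
    intro X; simp [pd, (hpd X).fderiv, Pi.single_apply]
  have hp2 : ∀ X, pd 2 p X = a (X 3) * c₂ := by
    intro X; simp [pd, (hpd X).fderiv, Pi.single_apply]
  have main : ∀ X, pd 3 u₁ X + u₁ X * pd 0 u₁ X + u₂ X * pd 1 u₁ X + u₃ X * pd 2 u₁ X
      = -(a (X 3)) := by
    intro X
    rw [h0, h1, h2, h3, hu₂ X, hu₃ X]
    ring
  refine ⟨fun X => by rw [main X, hp0], fun X => ?_, fun X => ?_, fun X => ?_⟩
  · rw [hu₂pd 3, hu₂pd 0, hu₂pd 1, hu₂pd 2, hp1]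
    linear_combination c₁ * main X
  · rw [hu₃pd 3, hu₃pd 0, hu₃pd 1, hu₃pd 2, hp2]
    linear_combination c₂ * main X
  · rw [hu₂pd 1, hu₃pd 2, h0, h1, h2]
    ring
end
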